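/- arXiv:2605.15747 — 2 statements merged into one kernel-verified Lean document; each statement's English description precedes it below -/
import Mathlib

section
/- (Chicken game, maximal entanglement at φ = 0 with γ > π/4.) Fix γ ∈ [0,π/2] and let player A play U_A := U(0,0,0) = I, and let U_B ∈ SU(2) be the strategy whose real-vector representation is u_B = (0,0,1,0), i.e. U_B = i·σy. Then, for the Chicken payoff matrices a = (−25, 50, 0, 15) and b = (−25, 0, 50, 15), the EWL expected payoffs satisfy ⟨$_A(U_A,U_B)⟩ − ⟨$_B(U_A,U_B)⟩ = 50·(1 − 2·sin²γ); in particular the difference is strictly negative whenever γ > π/4. -/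
open Complex Real Matrix Kronecker

/-- The Pauli matrix σx. -/
def sigmaX : Matrix (Fin 2) (Fin 2) ℂ := !![0, 1; 1, 0]

/-- The Pauli matrix σy. -/
def sigmaY : Matrix (Fin 2) (Fin 2) ℂ := !![0, -Complex.I; Complex.I, 0]

/-- The Pauli matrix σz. -/
def sigmaZ : Matrix (Fin 2) (Fin 2) ℂ := !![1, 0; 0, -1]

/-- `u ∈ ℝ⁴` is the real-vector representation of `U`:
`U = u¹·I + i u²·σx + i u³·σy + i u⁴·σz`. -/
def IsRealRep (u : Fin 4 → ℝ) (U : Matrix (Fin 2) (Fin 2) ℂ) : Prop :=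
  U = (u 0 : ℂ) • (1 : Matrix (Fin 2) (Fin 2) ℂ)
      + (Complex.I * (u 1 : ℂ)) • sigmaX
      + (Complex.I * (u 2 : ℂ)) • sigmaY
      + (Complex.I * (u 3 : ℂ)) • sigmaZ

/-- The quantum pure strategy `U(θ,α,β) ∈ SU(2)`. -/
noncomputable def Ustrat (θ α β : ℝ) : Matrix (Fin 2) (Fin 2) ℂ :=
  !![Complex.exp (Complex.I * α) * Real.cos (θ / 2),
      Complex.I * Complex.exp (Complex.I * β) * Real.sin (θ / 2);
    Complex.I * Complex.exp (-Complex.I * β) * Real.sin (θ / 2),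
      Complex.exp (-Complex.I * α) * Real.cos (θ / 2)]

/-- The EWL entangling operator `J(γ) = cos(γ/2)·(I⊗I) + i·sin(γ/2)·(σx⊗σx)`. -/
noncomputable def Jmat (γ : ℝ) : Matrix (Fin 2 × Fin 2) (Fin 2 × Fin 2) ℂ :=
  (Real.cos (γ / 2) : ℂ) • ((1 : Matrix (Fin 2) (Fin 2) ℂ) ⊗ₖ (1 : Matrix (Fin 2) (Fin 2) ℂ))
    + (Complex.I * Real.sin (γ / 2)) • (sigmaX ⊗ₖ sigmaX)

/-- The basis state `|ij⟩ = |i⟩⊗|j⟩` of `ℂ²⊗ℂ² ≅ ℂ⁴`. -/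
def ket (i j : Fin 2) : Fin 2 × Fin 2 → ℂ := fun p => if p = (i, j) then 1 else 0

/-- The Hermitian inner product `⟨v|w⟩` on `ℂ⁴`. -/
noncomputable def braket (v w : Fin 2 × Fin 2 → ℂ) : ℂ := ∑ p, (starRingEnd ℂ) (v p) * w p

/-- The EWL amplitude `⟨ij| J(γ)† (U_A⊗U_B) J(γ) |00⟩`. -/
noncomputable def amp (γ : ℝ) (UA UB : Matrix (Fin 2) (Fin 2) ℂ) (i j : Fin 2) : ℂ :=
  braket (ket i j) ((Jmat γ)ᴴ *ᵥ ((UA ⊗ₖ UB) *ᵥ (Jmat γ *ᵥ ket 0 0)))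

/-- The EWL expected payoff for payoff matrix `x` and pure strategies `U_A, U_B`. -/
noncomputable def ewlPayoff (γ : ℝ) (x : Fin 2 → Fin 2 → ℝ)
    (UA UB : Matrix (Fin 2) (Fin 2) ℂ) : ℝ :=
  ∑ i, ∑ j, x i j * ‖amp γ UA UB i j‖ ^ 2

/-- The Chicken payoff matrix of player A. -/
def chickenA : Fin 2 → Fin 2 → ℝ := ![![-25, 50], ![0, 15]]

/-- The Chicken payoff matrix of player B. -/
def chickenB : Fin 2 → Fin 2 → ℝ := ![![-25, 0], ![50, 15]]

/-- Chicken game at `φ = 0`: if player A plays the identity `U(0,0,0)` and player B plays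
`i·σy` (real-vector representation `(0,0,1,0)`), then
`⟨$_A⟩ − ⟨$_B⟩ = 50·(1 − 2·sin²γ)`, which is strictly negative for `γ > π/4`. -/
theorem stmt_18 (γ : ℝ) (hγ : γ ∈ Set.Icc 0 (Real.pi / 2)) :
    ewlPayoff γ chickenA (Ustrat 0 0 0) (Complex.I • sigmaY)
        - ewlPayoff γ chickenB (Ustrat 0 0 0) (Complex.I • sigmaY)
      = 50 * (1 - 2 * Real.sin γ ^ 2) ∧
    (Real.pi / 4 < γ →
      ewlPayoff γ chickenA (Ustrat 0 0 0) (Complex.I • sigmaY)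
        - ewlPayoff γ chickenB (Ustrat 0 0 0) (Complex.I • sigmaY) < 0) := by
  have key : ewlPayoff γ chickenA (Ustrat 0 0 0) (Complex.I • sigmaY)
        - ewlPayoff γ chickenB (Ustrat 0 0 0) (Complex.I • sigmaY)
      = 50 * (1 - 2 * Real.sin γ ^ 2) := by
    have h := Real.sin_sq_add_cos_sq (γ/2)
    have hs : Real.sin γ = 2 * Real.sin (γ/2) * Real.cos (γ/2) := by
      rw [← Real.sin_two_mul]; ring_nf
    set c := Real.cos (γ/2) with hc
    set s := Real.sin (γ/2) with hsdef
    simp only [ewlPayoff, amp, braket, ket, Jmat, Ustrat, sigmaX, sigmaY, chickenA, chickenB,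
      Matrix.mulVec, dotProduct, Fintype.sum_prod_type, Fin.sum_univ_two,
      Matrix.conjTranspose_apply, Matrix.kroneckerMap_apply, Matrix.smul_apply,
      Matrix.add_apply, Matrix.one_apply, Matrix.cons_val', Matrix.cons_val_zero,
      Matrix.cons_val_one, Matrix.head_cons, Matrix.head_fin_const, Matrix.empty_val',
      Matrix.cons_val_fin_one, smul_eq_mul, _root_.map_mul, _root_.map_add, Complex.conj_I,
      Complex.conj_ofReal, _root_.map_one, _root_.map_zero]
    simp [Complex.ext_iff, Complex.norm_def, Complex.normSq_apply, -Complex.ofReal_cos, -Complex.ofReal_sin]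
    ring_nf
    have hA : (0:ℝ) ≤ -(Real.cos (γ*(1/2))^2 * Real.sin (γ*(1/2))^2 * 2) + Real.cos (γ*(1/2))^4 + Real.sin (γ*(1/2))^4 := by
      nlinarith [sq_nonneg (Real.cos (γ*(1/2))^2 - Real.sin (γ*(1/2))^2)]
    have hB : (0:ℝ) ≤ Real.cos (γ*(1/2))^2 * Real.sin (γ*(1/2))^2 * 4 := by positivity
    have e : γ*(1/2) = γ/2 := by ring
    rw [Real.sq_sqrt hA, Real.sq_sqrt hB, e, ← hc, ← hsdef, hs]
    ring_nf
    linear_combination (50*(s^2+c^2+1))*h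
  refine ⟨key, fun hπ => ?_⟩
  rw [key]
  have h1 : Real.sin (Real.pi/4) < Real.sin γ :=
    Real.sin_lt_sin_of_lt_of_le_pi_div_two (by linarith [Real.pi_pos]) hγ.2 hπ
  rw [Real.sin_pi_div_four] at h1
  have h2 : (0:ℝ) < Real.sin γ := lt_trans (by positivity) h1
  nlinarith [h1, h2, Real.sq_sqrt (show (0:ℝ) ≤ 2 by norm_num), Real.sqrt_nonneg 2]
end

section
/- (Quantum player always at least matches the classical player in Chicken.) Consider the EWL protocol with the Chicken payoff matrices a = (a_{00},a_{01},a_{10},a_{11}) = (−25, 50, 0, 15) for player A and b = (b_{00},b_{01},b_{10},b_{11}) = (−25, 0, 50, 15) for player B. For every γ ∈ [0,π/2] and every classical strategy U_A = U(φ,0,0) with φ ∈ [0,π], there exists a quantum pure strategy U_B ∈ SU(2) such that ⟨$_A(U_A,U_B)⟩ ≤ ⟨$_B(U_A,U_B)⟩; moreover the inequality can be made strict whenever φ ≠ 0 or γ > π/4. -/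
open Complex Real Matrix Kronecker

noncomputable def myUB : Matrix (Fin 2) (Fin 2) ℂ :=
  !![((Real.sqrt 2 / 2 : ℝ) : ℂ), ((Real.sqrt 2 / 2 : ℝ) : ℂ);
     -((Real.sqrt 2 / 2 : ℝ) : ℂ), ((Real.sqrt 2 / 2 : ℝ) : ℂ)]

lemma I_pow_three : Complex.I ^ 3 = -Complex.I := by
  rw [pow_succ, Complex.I_sq]; ring

set_option maxHeartbeats 1000000

lemma amp1_01 (γ φ : ℝ) : amp γ (Ustrat φ 0 0) 1 0 1 = 0 := by
  simp only [amp, braket, ket, Jmat, Ustrat, sigmaX, mulVec, dotProduct,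
    Fintype.sum_prod_type, Fin.sum_univ_two, kroneckerMap_apply, conjTranspose_apply,
    Matrix.one_apply, Matrix.add_apply, Matrix.smul_apply, Matrix.cons_val', Matrix.cons_val_zero,
    Matrix.cons_val_one, Matrix.head_cons, Matrix.head_fin_const, Matrix.empty_val',
    Matrix.cons_val_fin_one, smul_eq_mul, Prod.mk.injEq]
  norm_num
  simp only [← Complex.cos_conj, ← Complex.sin_conj, map_div₀, Complex.conj_ofReal, map_ofNat]
  ring_nf
  try simp only [I_pow_three, Complex.I_sq, Complex.sin_sq]
  try ring_nf
  try ring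

lemma amp1_10 (γ φ : ℝ) : amp γ (Ustrat φ 0 0) 1 1 0 = Complex.I * ((Real.sin (φ/2) : ℝ) : ℂ) := by
  simp only [amp, braket, ket, Jmat, Ustrat, sigmaX, mulVec, dotProduct,
    Fintype.sum_prod_type, Fin.sum_univ_two, kroneckerMap_apply, conjTranspose_apply,
    Matrix.one_apply, Matrix.add_apply, Matrix.smul_apply, Matrix.cons_val', Matrix.cons_val_zero,
    Matrix.cons_val_one, Matrix.head_cons, Matrix.head_fin_const, Matrix.empty_val',
    Matrix.cons_val_fin_one, smul_eq_mul, Prod.mk.injEq]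
  norm_num
  simp only [← Complex.cos_conj, ← Complex.sin_conj, map_div₀, Complex.conj_ofReal, map_ofNat]
  ring_nf
  try simp only [I_pow_three, Complex.I_sq, Complex.sin_sq]
  try ring_nf
  try ring
  linear_combination (-Complex.sin (↑φ * (1 / 2)) * Complex.sin (↑γ * (1 / 2)) ^ 2) * _root_.I_pow_three + (Complex.I * Complex.sin (↑φ * (1 / 2))) * Complex.sin_sq_add_cos_sq (↑γ * (1 / 2))

lemma amp2_01 (γ φ : ℝ) : amp γ (Ustrat φ 0 0) myUB 0 1 =
    ((-(Real.sqrt 2 / 2 * Real.cos (φ/2) * (Real.cos (γ/2)^2 - Real.sin (γ/2)^2)) : ℝ) : ℂ) := by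
  simp only [amp, braket, ket, Jmat, Ustrat, myUB, sigmaX, mulVec, dotProduct,
    Fintype.sum_prod_type, Fin.sum_univ_two, kroneckerMap_apply, conjTranspose_apply,
    Matrix.one_apply, Matrix.add_apply, Matrix.smul_apply, Matrix.cons_val', Matrix.cons_val_zero,
    Matrix.cons_val_one, Matrix.head_cons, Matrix.head_fin_const, Matrix.empty_val',
    Matrix.cons_val_fin_one, smul_eq_mul, Prod.mk.injEq]
  norm_num
  simp only [← Complex.cos_conj, ← Complex.sin_conj, map_div₀, Complex.conj_ofReal, map_ofNat]
  ring_nf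
  try simp only [I_pow_three, Complex.I_sq, Complex.sin_sq]
  try ring_nf
  try ring
  linear_combination (Complex.cos (↑φ * (1 / 2)) * ((Real.sqrt 2 : ℝ) : ℂ) * Complex.sin (↑γ * (1 / 2)) ^ 2 * (-1 / 2)) * Complex.I_sq

lemma amp2_10 (γ φ : ℝ) : amp γ (Ustrat φ 0 0) myUB 1 0 =
    Complex.I * ((Real.sqrt 2 / 2 * (Real.sin (φ/2) + 2 * Real.cos (γ/2) * Real.sin (γ/2) * Real.cos (φ/2)) : ℝ) : ℂ) := by
  simp only [amp, braket, ket, Jmat, Ustrat, myUB, sigmaX, mulVec, dotProduct,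
    Fintype.sum_prod_type, Fin.sum_univ_two, kroneckerMap_apply, conjTranspose_apply,
    Matrix.one_apply, Matrix.add_apply, Matrix.smul_apply, Matrix.cons_val', Matrix.cons_val_zero,
    Matrix.cons_val_one, Matrix.head_cons, Matrix.head_fin_const, Matrix.empty_val',
    Matrix.cons_val_fin_one, smul_eq_mul, Prod.mk.injEq]
  norm_num
  simp only [← Complex.cos_conj, ← Complex.sin_conj, map_div₀, Complex.conj_ofReal, map_ofNat]
  ring_nf
  try simp only [I_pow_three, Complex.I_sq, Complex.sin_sq]
  try ring_nf
  try ring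
  linear_combination (-(Complex.sin (↑γ * (1 / 2)) ^ 2 * ((Real.sqrt 2 : ℝ) : ℂ) * Complex.sin (↑φ * (1 / 2)) / 2)) * _root_.I_pow_three + (Complex.I * ((Real.sqrt 2 : ℝ) : ℂ) * Complex.sin (↑φ * (1 / 2)) / 2) * Complex.sin_sq_add_cos_sq (↑γ * (1 / 2))

lemma sqrt2_mul_self : Real.sqrt 2 * Real.sqrt 2 = 2 :=
  Real.mul_self_sqrt (by norm_num)

lemma half_sq : ((Real.sqrt 2 / 2 : ℝ) : ℂ) * ((Real.sqrt 2 / 2 : ℝ) : ℂ) = 1/2 := by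
  rw [← Complex.ofReal_mul]
  have h : (Real.sqrt 2 / 2) * (Real.sqrt 2 / 2) = 1/2 := by
    linear_combination (1/4) * sqrt2_mul_self
  rw [h]
  norm_num

lemma sqrt2_sq_c : ((Real.sqrt 2 : ℝ) : ℂ) * ((Real.sqrt 2 : ℝ) : ℂ) = 2 := by
  rw [← Complex.ofReal_mul, sqrt2_mul_self]
  norm_num

lemma myUB_mem : myUB ∈ Matrix.specialUnitaryGroup (Fin 2) ℂ := by
  rw [Matrix.mem_specialUnitaryGroup_iff]
  constructor
  · rw [Matrix.mem_unitaryGroup_iff]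
    ext i j
    fin_cases i <;> fin_cases j <;>
      (norm_num [myUB, Matrix.mul_apply, Fin.sum_univ_two, Matrix.star_apply,
        RCLike.star_def, Complex.conj_ofReal, map_div₀, map_ofNat, Matrix.one_apply];
       try linear_combination (1/2 : ℂ) * sqrt2_sq_c)
  · rw [Matrix.det_fin_two]
    norm_num [myUB, map_div₀, map_ofNat]
    try linear_combination (1/2 : ℂ) * sqrt2_sq_c

lemma payoff_sub (γ : ℝ) (UA UB : Matrix (Fin 2) (Fin 2) ℂ) :
    ewlPayoff γ chickenB UA UB - ewlPayoff γ chickenA UA UB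
      = 50 * (‖amp γ UA UB 1 0‖ ^ 2 - ‖amp γ UA UB 0 1‖ ^ 2) := by
  simp [ewlPayoff, chickenA, chickenB, Fin.sum_univ_two]
  ring

/-- In the EWL Chicken game, against any classical strategy `U(φ,0,0)` the quantum player B
has a pure strategy `U_B ∈ SU(2)` with `⟨$_A⟩ ≤ ⟨$_B⟩`, strictly whenever `φ ≠ 0` or
`γ > π/4`. -/
theorem stmt_19 (γ : ℝ) (hγ : γ ∈ Set.Icc 0 (Real.pi / 2))
    (φ : ℝ) (hφ : φ ∈ Set.Icc 0 Real.pi) :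
    ∃ UB ∈ Matrix.specialUnitaryGroup (Fin 2) ℂ,
      ewlPayoff γ chickenA (Ustrat φ 0 0) UB ≤ ewlPayoff γ chickenB (Ustrat φ 0 0) UB ∧
      ((φ ≠ 0 ∨ Real.pi / 4 < γ) →
        ewlPayoff γ chickenA (Ustrat φ 0 0) UB < ewlPayoff γ chickenB (Ustrat φ 0 0) UB) := by
  obtain ⟨hγ0, hγ2⟩ := hγ
  obtain ⟨hφ0, hφπ⟩ := hφ
  have hπ := Real.pi_pos
  have hsφ : 0 ≤ Real.sin (φ/2) :=
    Real.sin_nonneg_of_nonneg_of_le_pi (by linarith) (by linarith)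
  have hcφ : 0 ≤ Real.cos (φ/2) :=
    Real.cos_nonneg_of_mem_Icc ⟨by linarith, by linarith⟩
  rcases le_or_gt γ (Real.pi/4) with hle | hlt
  · -- UB = 1
    have hd : ewlPayoff γ chickenB (Ustrat φ 0 0) 1 - ewlPayoff γ chickenA (Ustrat φ 0 0) 1
        = 50 * Real.sin (φ/2) ^ 2 := by
      rw [payoff_sub, amp1_01, amp1_10, norm_mul, Complex.norm_I, Complex.norm_real,
        one_mul, Real.norm_eq_abs, _root_.sq_abs]
      simp
    refine ⟨1, one_mem _, by nlinarith [sq_nonneg (Real.sin (φ/2))], ?_⟩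
    rintro (hφne | hγgt)
    · have hφpos : 0 < φ := lt_of_le_of_ne hφ0 (Ne.symm hφne)
      have hs : 0 < Real.sin (φ/2) :=
        Real.sin_pos_of_pos_of_lt_pi (by linarith) (by linarith)
      nlinarith
    · linarith
  · -- UB = myUB
    have hd : ewlPayoff γ chickenB (Ustrat φ 0 0) myUB - ewlPayoff γ chickenA (Ustrat φ 0 0) myUB
        = 50 * ((Real.sqrt 2 / 2 * (Real.sin (φ/2) + 2 * Real.cos (γ/2) * Real.sin (γ/2) * Real.cos (φ/2))) ^ 2
            - (Real.sqrt 2 / 2 * Real.cos (φ/2) * (Real.cos (γ/2) ^ 2 - Real.sin (γ/2) ^ 2)) ^ 2) := by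
      rw [payoff_sub, amp2_01, amp2_10, norm_mul, Complex.norm_I, Complex.norm_real,
        Complex.norm_real, one_mul, Real.norm_eq_abs, Real.norm_eq_abs, _root_.sq_abs, _root_.sq_abs]
      ring
    set c := Real.cos (γ/2) with hc
    set s := Real.sin (γ/2) with hs
    set cφ := Real.cos (φ/2) with hcp
    set sφ := Real.sin (φ/2) with hsp
    have hpy1 : s ^ 2 + c ^ 2 = 1 := Real.sin_sq_add_cos_sq _
    have hpy2 : sφ ^ 2 + cφ ^ 2 = 1 := Real.sin_sq_add_cos_sq _
    have hcosγ : Real.cos γ = c ^ 2 - s ^ 2 := by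
      rw [show γ = 2 * (γ/2) by ring, Real.cos_two_mul' ]
    have hsinγ : Real.sin γ = 2 * s * c := by
      rw [show γ = 2 * (γ/2) by ring, Real.sin_two_mul]; try ring
    have hcos_nonneg : 0 ≤ c ^ 2 - s ^ 2 := by
      rw [← hcosγ]; exact Real.cos_nonneg_of_mem_Icc ⟨by linarith, by linarith⟩
    have hlt' : c ^ 2 - s ^ 2 < 2 * s * c := by
      rw [← hcosγ, ← hsinγ]
      rw [← Real.sin_pi_div_two_sub γ]
      exact Real.strictMonoOn_sin (Set.mem_Icc.mpr ⟨by linarith, by linarith⟩)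
        (Set.mem_Icc.mpr ⟨by linarith, by linarith⟩) (by linarith)
    have hF1 : 0 < sφ + cφ * (2 * s * c - (c ^ 2 - s ^ 2)) := by
      rcases eq_or_lt_of_le hcφ with h | h
      · nlinarith [mul_eq_zero_of_left h.symm (2 * s * c - (c ^ 2 - s ^ 2)),
          sq_nonneg (sφ - 1)]
      · nlinarith [mul_pos h (by linarith : (0:ℝ) < 2 * s * c - (c ^ 2 - s ^ 2))]
    have hF2 : 0 < sφ + cφ * (2 * s * c + (c ^ 2 - s ^ 2)) := by
      rcases eq_or_lt_of_le hcφ with h | h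
      · nlinarith [mul_eq_zero_of_left h.symm (2 * s * c + (c ^ 2 - s ^ 2)),
          sq_nonneg (sφ - 1)]
      · nlinarith [mul_pos h (by linarith : (0:ℝ) < 2 * s * c + (c ^ 2 - s ^ 2))]
    have hkey : (Real.sqrt 2 / 2 * cφ * (c ^ 2 - s ^ 2)) ^ 2
        < (Real.sqrt 2 / 2 * (sφ + 2 * c * s * cφ)) ^ 2 := by
      nlinarith [mul_pos hF1 hF2, sqrt2_mul_self]
    exact ⟨myUB, myUB_mem, by nlinarith, fun _ => by nlinarith⟩
end
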